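/- arXiv:1702.02312 — 4 statements merged into one kernel-verified Lean document; each statement's English description precedes it below -/
import Mathlib

section
/- Let K/k be a purely inseparable field extension of characteristic p > 0 of finite exponent (i.e., K^{p^e} ⊆ k for some e). Then a subset B of K is an r-basis of K/k (a minimal generating set of K over k(K^p)) if and only if B is a minimal generating set of K over k. -/
/-!
Adjoining `p`-th powers never helps to generate `K` over `k`: if `K = k(K^p, S)`, then for every
`m` the elements `x` with `x ^ p ^ m ∈ k(S)` form a field containing `k`, `S` and, as soon as all
`p ^ (m + 1)`-th powers lie in `k(S)`, also `K^p`; hence all `p ^ m`-th powers lie in `k(S)`.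
Descending from `m = e` gives `K = k(S)`. Thus `S` generates `K` over `k(K^p)` iff it generates
`K` over `k`, and minimality transfers because `x ∈ F(B \ {x})` just says that `B \ {x}` still
generates.
-/

open IntermediateField

variable (p : ℕ) (k K : Type*) [Field k] [Field K] [Algebra k K]

/-- `k(K^p)`. -/
noncomputable def kP : IntermediateField k K :=
  IntermediateField.adjoin k (Set.range fun x : K => x ^ p)

variable {p k K}

theorem IntermediateField.mem_adjoin_diff_singleton_iff {F E : Type*} [Field F] [Field E]
    [Algebra F E] {B : Set E} (hB : adjoin F B = ⊤) (x : E) :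
    x ∈ adjoin F (B \ {x}) ↔ adjoin F (B \ {x}) = ⊤ := by
  refine ⟨fun hx => eq_top_iff.2 (hB ▸ adjoin_le_iff.2 fun y hy => ?_), fun h => h ▸ mem_top⟩
  by_cases hyx : y = x
  · exact hyx ▸ hx
  · exact subset_adjoin _ _ ⟨hy, hyx⟩

section Descent

variable [ExpChar K p] {S : Set K}

theorem pow_pow_mem_adjoin_of_pow_pow_succ_mem
    (hS : adjoin k (Set.range (· ^ p) ∪ S) = ⊤) (m : ℕ)
    (h : ∀ x : K, x ^ p ^ (m + 1) ∈ adjoin k S) (x : K) : x ^ p ^ m ∈ adjoin k S := by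
  let M : IntermediateField k K :=
    ((adjoin k S).toSubfield.comap (iterateFrobenius K p m)).toIntermediateField fun a => by
      rw [Subfield.mem_comap, iterateFrobenius_def, ← map_pow]
      exact (adjoin k S).algebraMap_mem _
  have hM : adjoin k (Set.range (· ^ p) ∪ S) ≤ M := by
    rw [adjoin_le_iff]
    rintro _ (⟨y, rfl⟩ | hy)
    · change (y ^ p) ^ p ^ m ∈ adjoin k S
      rw [← pow_mul, ← pow_succ']
      exact h y
    · exact pow_mem (subset_adjoin k S hy) (p ^ m)
  exact hM (hS ▸ mem_top)

theorem adjoin_eq_top_of_adjoin_range_pow_union_eq_top (e : ℕ)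
    (he : ∀ x : K, x ^ p ^ e ∈ (⊥ : IntermediateField k K))
    (hS : adjoin k (Set.range (· ^ p) ∪ S) = ⊤) : adjoin k S = ⊤ := by
  suffices ∀ j, (∀ x : K, x ^ p ^ j ∈ adjoin k S) → ∀ x : K, x ∈ adjoin k S from
    eq_top_iff.2 fun x _ => this e (fun y => (bot_le : ⊥ ≤ adjoin k S) (he y)) x
  intro j
  induction j with
  | zero => simp
  | succ j ih => exact fun h => ih (pow_pow_mem_adjoin_of_pow_pow_succ_mem hS j h)

theorem adjoin_kP_eq_top_iff (e : ℕ) (he : ∀ x : K, x ^ p ^ e ∈ (⊥ : IntermediateField k K))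
    (S : Set K) : adjoin (kP p k K) S = ⊤ ↔ adjoin k S = ⊤ := by
  rw [← restrictScalars_eq_top_iff (K := k), kP, adjoin_adjoin_left]
  exact ⟨adjoin_eq_top_of_adjoin_range_pow_union_eq_top e he,
    fun h => eq_top_iff.2 (h ▸ adjoin.mono _ _ _ Set.subset_union_right)⟩

end Descent

theorem stmt_4_general (hp : p.Prime) [CharP K p]
    (e : ℕ) (he : ∀ x : K, x ^ p ^ e ∈ (⊥ : IntermediateField k K)) (B : Set K) :
    (IntermediateField.adjoin ↥(kP p k K) B = ⊤ ∧
        ∀ x ∈ B, x ∉ IntermediateField.adjoin ↥(kP p k K) (B \ {x})) ↔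
      (IntermediateField.adjoin k B = ⊤ ∧
        ∀ x ∈ B, x ∉ IntermediateField.adjoin k (B \ {x})) := by
  have := ExpChar.prime (R := K) hp
  have generates_iff := adjoin_kP_eq_top_iff e he
  rw [generates_iff]
  refine and_congr_right fun hB => forall₂_congr fun x _ => ?_
  rw [mem_adjoin_diff_singleton_iff ((generates_iff B).2 hB), mem_adjoin_diff_singleton_iff hB,
    generates_iff]

/-- If `K/k` is purely inseparable of finite exponent (`K^{p^e} ⊆ k`),
then `B` is an r-basis of `K/k` (minimal generating set over `k(K^p)`) iff `B` is a
minimal generating set of `K` over `k`. -/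
theorem stmt_4 (hp : p.Prime) [CharP K p] [IsPurelyInseparable k K]
    (e : ℕ) (he : ∀ x : K, x ^ p ^ e ∈ (⊥ : IntermediateField k K)) (B : Set K) :
    (IntermediateField.adjoin ↥(kP p k K) B = ⊤ ∧
        ∀ x ∈ B, x ∉ IntermediateField.adjoin ↥(kP p k K) (B \ {x})) ↔
      (IntermediateField.adjoin k B = ⊤ ∧
        ∀ x ∈ B, x ∉ IntermediateField.adjoin k (B \ {x})) :=
  stmt_4_general hp e he B
end

section
/- Let k ⊆ L ⊆ K be purely inseparable field extensions of characteristic p > 0 with K/k of finite exponent. If B_L is an r-basis of L/k and B_K is an r-basis of K/k, then |B_L| ≤ |B_K|. -/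
/-!
Write `k(E^p)` for the field generated over `k` by the `p`-th powers of `E`. Since `K/k` has
finite exponent, `k(E^p)` is superfluous among generators of `E`; hence an r-basis `B` of `E` is
independent over `k(E^p)`: no element lies in the field generated by the others and `k(E^p)`.
As `b^p ∈ k(E^p)` for `b ∈ B`, adjoining the elements of a finite `B` to `k(E^p)` one at a time
multiplies the degree by `p` each time, so `[E : k(E^p)] = p^|B|`.

If `u^p ∈ M` and `u ∉ M`, then `[M(u) : M] = p` while `k(M(u)^p) = k(M^p)(u^p)` has degree at
most `p` over `k(M^p)`; by the tower law `[M : k(M^p)] ≤ [M(u) : k(M(u)^p)]`. Climbing from `L`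
to `K` this way gives `|B_L| ≤ |B_K|` when `B_K` is finite. When `B_K` is infinite, every element
of `B_L` lies in `k(T)` for some finite `T ⊆ B_K`, and `B_L ∩ k(T)` is finite, being independent
inside the finite-dimensional field `k(T)`; so `|B_L| ≤ |Finset B_K| · ℵ₀ = |B_K|`.
-/

open IntermediateField

variable (p : ℕ) (k K : Type*) [Field k] [Field K] [Algebra k K]

/-- `B` is an r-basis of the intermediate field `E` over `k`: since the extensions involved
have finite exponent, this is a minimal generating set of `E` over `k`. -/
def IsRBasisOf (E : IntermediateField k K) (B : Set K) : Prop :=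
  B ⊆ (E : Set K) ∧ IntermediateField.adjoin k B = E ∧
    ∀ x ∈ B, x ∉ IntermediateField.adjoin k (B \ {x})

namespace IntermediateField

variable {p k K}

open Polynomial Module

def adjoinPow (p : ℕ) (E : IntermediateField k K) : IntermediateField k K :=
  adjoin k ((· ^ p) '' (E : Set K))

theorem adjoinPow_le_iff {E F : IntermediateField k K} :
    adjoinPow p E ≤ F ↔ ∀ x ∈ E, x ^ p ∈ F := by
  simp [adjoinPow, adjoin_le_iff, Set.subset_def]

theorem adjoinPow_le (E : IntermediateField k K) : adjoinPow p E ≤ E :=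
  adjoinPow_le_iff.mpr fun _ hx ↦ pow_mem hx p

theorem pow_mem_adjoinPow {E : IntermediateField k K} {x : K} (hx : x ∈ E) :
    x ^ p ∈ adjoinPow p E :=
  subset_adjoin k _ ⟨x, hx, rfl⟩

theorem adjoinPow_mono {A B : IntermediateField k K} (h : A ≤ B) : adjoinPow p A ≤ adjoinPow p B :=
  adjoinPow_le_iff.mpr fun _ hx ↦ pow_mem_adjoinPow (h hx)

theorem pow_mem_adjoin_image_pow [ExpChar K p] {S : Set K} {x : K} (hx : x ∈ adjoin k S) :
    x ^ p ∈ adjoin k ((· ^ p) '' S) := by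
  induction hx using adjoin_induction with
  | mem y hy => exact subset_adjoin k _ ⟨y, hy, rfl⟩
  | algebraMap y => rw [← map_pow]; exact algebraMap_mem _ _
  | add x y _ _ hx hy => rw [add_pow_expChar]; exact add_mem hx hy
  | inv x _ hx => rw [inv_pow]; exact inv_mem hx
  | mul x y _ _ hx hy => rw [mul_pow]; exact mul_mem hx hy

theorem adjoinPow_adjoin [ExpChar K p] (S : Set K) :
    adjoinPow p (adjoin k S) = adjoin k ((· ^ p) '' S) := by
  refine le_antisymm (adjoin_le_iff.mpr ?_)
    (adjoin.mono _ _ _ (Set.image_mono (subset_adjoin k S)))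
  rintro _ ⟨y, hy, rfl⟩
  exact pow_mem_adjoin_image_pow hy

theorem adjoinPow_sup [ExpChar K p] (A B : IntermediateField k K) :
    adjoinPow p (A ⊔ B) = adjoinPow p A ⊔ adjoinPow p B := by
  rw [← adjoin_self k A, ← adjoin_self k B, ← adjoin_union, adjoinPow_adjoin, adjoinPow_adjoin,
    adjoinPow_adjoin, Set.image_union, adjoin_union]

theorem le_of_le_sup_adjoinPow [ExpChar K p] {e : ℕ}
    (he : ∀ x : K, x ^ p ^ e ∈ (⊥ : IntermediateField k K)) {E A : IntermediateField k K}
    (h : E ≤ A ⊔ adjoinPow p E) : E ≤ A := by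
  have key : ∀ i, E ≤ adjoin k (A ∪ (· ^ p ^ i) '' (E : Set K)) := by
    intro i
    induction i with
    | zero => exact fun x hx ↦ subset_adjoin k _ (Or.inr ⟨x, hx, pow_one x⟩)
    | succ i ih =>
      refine h.trans (sup_le (fun x hx ↦ subset_adjoin k ((A : Set K) ∪ _) (Or.inl hx))
        (adjoinPow_le_iff.mpr fun y hy ↦ ?_))
      refine adjoin_le_iff.mpr ?_ (pow_mem_adjoin_image_pow (p := p) (ih hy))
      rintro _ ⟨z, hz | ⟨w, hw, rfl⟩, rfl⟩
      · exact pow_mem (subset_adjoin k ((A : Set K) ∪ _) (Or.inl hz)) p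
      · exact subset_adjoin k _ (Or.inr ⟨w, hw, by simp only [← pow_mul, ← pow_succ]⟩)
  refine (key e).trans (adjoin_le_iff.mpr (Set.union_subset le_rfl ?_))
  rintro _ ⟨y, -, rfl⟩
  exact SetLike.le_def.mp bot_le (he y)

theorem relfinrank_restrictScalars (F : IntermediateField k K) (E : IntermediateField F K) :
    relfinrank F (E.restrictScalars k) = finrank F E := by
  have h : F ≤ E.restrictScalars k := fun x hx ↦ E.algebraMap_mem ⟨x, hx⟩
  rw [relfinrank_eq_finrank_of_le h]
  rfl

theorem relfinrank_sup_adjoin_simple_eq [ExpChar K p] (hp : p.Prime) {F : IntermediateField k K}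
    {b : K} (hb : b ∉ F) (hbp : b ^ p ∈ F) : relfinrank F (F ⊔ adjoin k {b}) = p := by
  rw [← restrictScalars_adjoin_eq_sup, relfinrank_restrictScalars]
  set c : F := ⟨b ^ p, hbp⟩
  have hmonic : (X ^ p - C c).Monic := monic_X_pow_sub_C c hp.ne_zero
  have hroot : aeval b (X ^ p - C c) = 0 := by simp [c]
  have hirr : Irreducible (X ^ p - C c) :=
    X_pow_sub_C_irreducible_of_prime hp fun y hy ↦ hb <|
      frobenius_inj K p (congrArg Subtype.val hy) ▸ y.2
  rw [adjoin.finrank ⟨_, hmonic, hroot⟩, ← minpoly.eq_of_irreducible_of_monic hirr hroot hmonic,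
    natDegree_X_pow_sub_C]

theorem relfinrank_sup_adjoin_simple_le [ExpChar K p] (hp : p.Prime) {F : IntermediateField k K}
    {b : K} (hbp : b ^ p ∈ F) : relfinrank F (F ⊔ adjoin k {b}) ≤ p := by
  by_cases hb : b ∈ F
  · rw [sup_eq_left.mpr (adjoin_simple_le_iff.mpr hb), relfinrank_self]
    exact hp.one_lt.le
  · exact (relfinrank_sup_adjoin_simple_eq hp hb hbp).le

theorem sup_adjoin_insert (F : IntermediateField k K) (a : K) (S : Set K) :
    F ⊔ adjoin k (insert a S) = F ⊔ adjoin k S ⊔ adjoin k {a} := by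
  rw [Set.insert_eq, adjoin_union, sup_comm (adjoin k {a}), sup_assoc]

/-- With `F = k(E^p)` this is relative `p`-independence. -/
def IsAdjoinIndependent (F : IntermediateField k K) (S : Set K) : Prop :=
  ∀ x ∈ S, x ∉ adjoin k (S \ {x}) ⊔ F

theorem IsAdjoinIndependent.mono {F G : IntermediateField k K} {S T : Set K}
    (h : IsAdjoinIndependent G T) (hST : S ⊆ T) (hFG : F ≤ G) : IsAdjoinIndependent F S :=
  fun x hx hmem ↦ h x (hST hx) <|
    sup_le_sup (adjoin.mono _ _ _ (Set.sdiff_subset_sdiff_left hST)) hFG hmem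

theorem IsAdjoinIndependent.relfinrank_sup_adjoin_eq [ExpChar K p] (hp : p.Prime)
    {F : IntermediateField k K} {S : Finset K} (hS : IsAdjoinIndependent F S)
    (hSp : ∀ x ∈ S, x ^ p ∈ F) : relfinrank F (F ⊔ adjoin k S) = p ^ S.card := by
  classical
  induction S using Finset.induction with
  | empty => simp [relfinrank_self]
  | @insert a S ha ih =>
    have hF : F ≤ F ⊔ adjoin k S := le_sup_left
    have ha' : a ∉ F ⊔ adjoin k S := by
      have := hS a (by simp)
      rwa [Finset.coe_insert, Set.insert_sdiff_self_of_notMem (by simpa), sup_comm] at this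
    rw [Finset.coe_insert, sup_adjoin_insert, ← relfinrank_mul_relfinrank hF le_sup_left,
      ih (hS.mono (by simp) le_rfl) fun x hx ↦ hSp x (by simp [hx]),
      relfinrank_sup_adjoin_simple_eq hp ha' (hF (hSp a (by simp))),
      Finset.card_insert_of_notMem ha, pow_succ]

theorem IsAdjoinIndependent.finite [ExpChar K p] (hp : p.Prime) {F E : IntermediateField k K}
    [FiniteDimensional k E] {S : Set K} (hS : IsAdjoinIndependent F S) (hSE : S ⊆ E)
    (hSp : ∀ x ∈ S, x ^ p ∈ F) : S.Finite := by
  refine Set.not_infinite.mp fun hinf ↦ ?_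
  obtain ⟨T, hTS, hcard⟩ := hinf.exists_subset_card_eq (finrank k E)
  have hle : F ⊓ E ⊔ adjoin k T ≤ E := sup_le inf_le_right (adjoin_le_iff.mpr (hTS.trans hSE))
  have : FiniteDimensional k ↥(F ⊓ E ⊔ adjoin k T) :=
    Submodule.finiteDimensional_of_le (S₁ := (F ⊓ E ⊔ adjoin k T).toSubmodule)
      (S₂ := E.toSubmodule) hle
  have hdeg := (hS.mono hTS inf_le_left).relfinrank_sup_adjoin_eq hp fun x hx ↦
    mem_inf.mpr ⟨hSp x (hTS hx), pow_mem (hSE (hTS hx)) p⟩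
  have : p ^ finrank k E ≤ finrank k E := calc
    p ^ finrank k E = relfinrank (F ⊓ E) (F ⊓ E ⊔ adjoin k T) := by rw [hdeg, hcard]
    _ ≤ finrank k ↥(F ⊓ E ⊔ adjoin k T) :=
        Nat.le_of_dvd finrank_pos (relfinrank_dvd_finrank_bot _ _)
    _ ≤ finrank k E := finrank_le_of_le_right hle
  exact (Nat.lt_pow_self hp.one_lt).not_ge this

theorem relfinrank_adjoinPow_le_of_pow_mem [ExpChar K p] (hp : p.Prime)
    {M : IntermediateField k K} {u : K} (hu : u ^ p ∈ M) :
    relfinrank (adjoinPow p M) M ≤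
      relfinrank (adjoinPow p (M ⊔ adjoin k {u})) (M ⊔ adjoin k {u}) := by
  by_cases huM : u ∈ M
  · rw [sup_eq_left.mpr (adjoin_simple_le_iff.mpr huM)]
  set M' := M ⊔ adjoin k {u}
  have hpow : adjoinPow p M' = adjoinPow p M ⊔ adjoin k {u ^ p} := by
    rw [adjoinPow_sup, adjoinPow_adjoin, Set.image_singleton]
  have hlow : relfinrank (adjoinPow p M) (adjoinPow p M') ≤ p :=
    hpow ▸ relfinrank_sup_adjoin_simple_le hp (pow_mem_adjoinPow hu)
  have htower : relfinrank (adjoinPow p M) M * p =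
      relfinrank (adjoinPow p M) (adjoinPow p M') * relfinrank (adjoinPow p M') M' := by
    rw [← relfinrank_sup_adjoin_simple_eq hp huM hu,
      relfinrank_mul_relfinrank (adjoinPow_le M) le_sup_left,
      relfinrank_mul_relfinrank (adjoinPow_mono le_sup_left) (adjoinPow_le M')]
  refine Nat.le_of_mul_le_mul_right ?_ hp.pos
  calc relfinrank (adjoinPow p M) M * p
      = relfinrank (adjoinPow p M) (adjoinPow p M') * relfinrank (adjoinPow p M') M' := htower
    _ ≤ p * relfinrank (adjoinPow p M') M' := Nat.mul_le_mul_right _ hlow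
    _ = relfinrank (adjoinPow p M') M' * p := mul_comm _ _

theorem relfinrank_adjoinPow_le_sup_adjoin_simple [ExpChar K p] (hp : p.Prime)
    {M : IntermediateField k K} {x : K} {n : ℕ} (hx : x ^ p ^ n ∈ M) :
    relfinrank (adjoinPow p M) M ≤
      relfinrank (adjoinPow p (M ⊔ adjoin k {x})) (M ⊔ adjoin k {x}) := by
  induction n generalizing x with
  | zero => rw [sup_eq_left.mpr (adjoin_simple_le_iff.mpr (by simpa using hx))]
  | succ n ih =>
    have hxp : x ^ p ∈ M ⊔ adjoin k {x ^ p} := le_sup_right (a := M) (mem_adjoin_simple_self k _)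
    have hsup : M ⊔ adjoin k {x ^ p} ⊔ adjoin k {x} = M ⊔ adjoin k {x} := by
      rw [sup_assoc, sup_eq_right.mpr
        (adjoin_simple_le_iff.mpr (pow_mem (mem_adjoin_simple_self k x) p))]
    calc relfinrank (adjoinPow p M) M
        ≤ relfinrank (adjoinPow p (M ⊔ adjoin k {x ^ p})) (M ⊔ adjoin k {x ^ p}) :=
          ih (by rwa [← pow_mul, ← pow_succ'])
      _ ≤ _ := relfinrank_adjoinPow_le_of_pow_mem hp hxp
      _ = _ := by rw [hsup]

theorem relfinrank_adjoinPow_le_sup_adjoin [ExpChar K p] (hp : p.Prime)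
    (M : IntermediateField k K) (T : Finset K) (hT : ∀ x ∈ T, ∃ n : ℕ, x ^ p ^ n ∈ M) :
    relfinrank (adjoinPow p M) M ≤
      relfinrank (adjoinPow p (M ⊔ adjoin k T)) (M ⊔ adjoin k T) := by
  classical
  induction T using Finset.induction with
  | empty => simp
  | @insert a T _ ih =>
    obtain ⟨n, hn⟩ := hT a (Finset.mem_insert_self a T)
    rw [Finset.coe_insert, sup_adjoin_insert]
    have hn' : a ^ p ^ n ∈ M ⊔ adjoin k T := le_sup_left (b := adjoin k (T : Set K)) hn
    exact (ih fun x hx ↦ hT x (Finset.mem_insert_of_mem hx)).trans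
      (relfinrank_adjoinPow_le_sup_adjoin_simple hp hn')

open Cardinal in
theorem mk_le_of_finite_inter_adjoin {A B : Set K} (hB : B.Infinite) (hA : A ⊆ adjoin k B)
    (hfin : ∀ T : Finset K, (A ∩ adjoin k (T : Set K)).Finite) : #A ≤ #B := by
  classical
  have := hB.to_subtype
  have hcover : A ⊆ ⋃ T : Finset B, A ∩ adjoin k (T.map (.subtype _) : Set K) := by
    intro x hx
    obtain ⟨T, hTB, hxT⟩ := exists_finset_of_mem_adjoin (hA hx)
    exact Set.mem_iUnion.mpr ⟨T.subtype (· ∈ B), hx, by rwa [Finset.subtype_map_of_mem hTB]⟩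
  calc #A ≤ #(⋃ T : Finset B, A ∩ adjoin k (T.map (.subtype _) : Set K)) :=
        mk_le_mk_of_subset hcover
    _ ≤ #(Finset B) * ℵ₀ :=
        (mk_iUnion_le _).trans (by gcongr; exact ciSup_le' fun T ↦ (hfin _).lt_aleph0.le)
    _ = #B := by rw [mk_finset_of_infinite, mul_aleph0_eq (aleph0_le_mk B)]

end IntermediateField

namespace IsRBasisOf

variable {p k K}

theorem isAdjoinIndependent [ExpChar K p] {e : ℕ}
    (he : ∀ x : K, x ^ p ^ e ∈ (⊥ : IntermediateField k K)) {E : IntermediateField k K}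
    {B : Set K} (hB : IsRBasisOf k K E B) : IsAdjoinIndependent (adjoinPow p E) B := by
  obtain ⟨hBE, hgen, hmin⟩ := hB
  intro x hx hmem
  have hle : E ≤ adjoin k (B \ {x}) ⊔ adjoinPow p E := by
    conv_lhs => rw [← hgen]
    refine adjoin_le_iff.mpr fun y hy ↦ ?_
    rcases eq_or_ne y x with rfl | hyx
    · exact hmem
    · exact le_sup_left (b := adjoinPow p E) (subset_adjoin k _ ⟨hy, hyx⟩)
  exact hmin x hx (le_of_le_sup_adjoinPow he hle (hBE hx))

theorem relfinrank_adjoinPow_eq [ExpChar K p] (hp : p.Prime) {e : ℕ}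
    (he : ∀ x : K, x ^ p ^ e ∈ (⊥ : IntermediateField k K)) {E : IntermediateField k K}
    {S : Finset K} (hS : IsRBasisOf k K E S) : relfinrank (adjoinPow p E) E = p ^ S.card := by
  have := (hS.isAdjoinIndependent he).relfinrank_sup_adjoin_eq hp fun x hx ↦
    pow_mem_adjoinPow (hS.1 hx)
  rwa [hS.2.1, sup_eq_right.mpr (adjoinPow_le E)] at this

theorem finite_inter_adjoin [ExpChar K p] [Algebra.IsIntegral k K] (hp : p.Prime) {e : ℕ}
    (he : ∀ x : K, x ^ p ^ e ∈ (⊥ : IntermediateField k K)) {E : IntermediateField k K}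
    {B : Set K} (hB : IsRBasisOf k K E B) (T : Finset K) : (B ∩ adjoin k (T : Set K)).Finite :=
  have : FiniteDimensional k (adjoin k (T : Set K)) :=
    finiteDimensional_adjoin fun x _ ↦ Algebra.IsIntegral.isIntegral x
  ((hB.isAdjoinIndependent he).mono Set.inter_subset_left le_rfl).finite hp
    Set.inter_subset_right fun _ hx ↦ pow_mem_adjoinPow (hB.1 hx.1)

end IsRBasisOf

/-- If `k ⊆ L ⊆ K` with `K/k` purely inseparable of finite exponent,
`B_L` an r-basis of `L/k` and `B_K` an r-basis of `K/k`, then `|B_L| ≤ |B_K|`. -/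
theorem stmt_5 (hp : p.Prime) [CharP K p] [IsPurelyInseparable k K]
    (e : ℕ) (he : ∀ x : K, x ^ p ^ e ∈ (⊥ : IntermediateField k K))
    (L : IntermediateField k K) (BL BK : Set K)
    (hL : IsRBasisOf k K L BL) (hK : IsRBasisOf k K ⊤ BK) :
    Cardinal.mk ↥BL ≤ Cardinal.mk ↥BK := by
  have : ExpChar K p := ExpChar.prime hp
  have hfin := hL.finite_inter_adjoin hp he
  rcases BK.finite_or_infinite with hKfin | hKinf
  · obtain ⟨SK, rfl⟩ := hKfin.exists_finset_coe
    obtain ⟨SL, rfl⟩ := (by simpa [hK.2.1] using hfin SK : BL.Finite).exists_finset_coe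
    have hdeg : p ^ SL.card ≤ p ^ SK.card := by
      rw [← hL.relfinrank_adjoinPow_eq hp he, ← hK.relfinrank_adjoinPow_eq hp he]
      simpa [hK.2.1] using relfinrank_adjoinPow_le_sup_adjoin hp L SK fun x _ ↦
        ⟨e, SetLike.le_def.mp bot_le (he x)⟩
    simpa using (Nat.pow_le_pow_iff_right hp.one_lt).mp hdeg
  · refine mk_le_of_finite_inter_adjoin hKinf ?_ hfin
    rw [hK.2.1]
    exact fun x _ ↦ mem_top
end

section
/- Let K₁/k and K₂/k be purely inseparable subextensions of a common extension, which are k-linearly disjoint, and let B₁, B₂ be r-bases of K₁/k and K₂/k respectively (K₁/k, K₂/k of finite exponent). Then B₁ ∪ B₂ is an r-basis of K₁K₂/k, and B₁ is an r-basis of K₁K₂/K₂. In particular di(K₁K₂/k) = di(K₁/k) + di(K₂/k) and di(K₁K₂/K₂) = di(K₁/k). -/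
open IntermediateField

variable (p : ℕ) (k K : Type*) [Field k] [Field K] [Algebra k K]

/-- `K₁` and `K₂` are `k`-linearly disjoint: every finite family of elements of `K₁` that is
linearly independent over `k` remains linearly independent over `K₂`. -/
def LinDisjBase (K₁ K₂ : IntermediateField k K) : Prop :=
  ∀ (m : ℕ) (v : Fin m → K), (∀ i, v i ∈ K₁) →
    LinearIndependent k v → LinearIndependent ↥K₂ v

/-- `B` is an r-basis (minimal generating set) of `E` over the intermediate field `F`
(adjunction performed over `k`, i.e. generators over `F` mean `k(F ∪ B) = E`). -/
def IsRBasisRel (F E : IntermediateField k K) (B : Set K) : Prop :=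
  IntermediateField.adjoin k ((F : Set K) ∪ B) = E ∧
    ∀ x ∈ B, x ∉ IntermediateField.adjoin k ((F : Set K) ∪ (B \ {x}))

/-!
If `x ∈ K₁` is a `K₂`-linear combination of elements of `K₁`, it is already a `k`-linear
combination of them: otherwise a `k`-basis of those elements extended by `x` would stay
independent over `K₂`. As everything is algebraic, `k(K₂ ∪ S)` is the `K₂`-span of the monomials
in `S`, so `K₁ ∩ k(K₂ ∪ S) = k(S)` for `S ⊆ K₁`. Hence an r-basis `B₁` of `K₁/k` stays minimal
over `K₂`, no element of `B₁` (nor, symmetrically, of `B₂`) can be dropped from `B₁ ∪ B₂`, and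
`B₁`, `B₂` are disjoint.
-/

section

variable {k K}

theorem LinDisjBase.linearIndependent {K₁ K₂ : IntermediateField k K}
    (h : LinDisjBase k K K₁ K₂) {ι : Type*} {v : ι → K} (hv : ∀ i, v i ∈ K₁)
    (hli : LinearIndependent k v) : LinearIndependent K₂ v := by
  rw [linearIndependent_iff_finset_linearIndependent]
  intro s
  let e := s.equivFin
  refine (linearIndependent_equiv e.symm).1 (h _ _ (fun _ => hv _) ?_)
  exact hli.comp _ (Subtype.val_injective.comp e.symm.injective)

theorem LinDisjBase.linearDisjoint {K₁ K₂ : IntermediateField k K}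
    (h : LinDisjBase k K K₁ K₂) : K₁.LinearDisjoint K₂ :=
  let a := Module.Basis.ofVectorSpace k K₁
  .of_basis_left a <| h.linearIndependent (fun i => (a i).2) <|
    a.linearIndependent.map' K₁.val.toLinearMap
      (LinearMap.ker_eq_bot_of_injective K₁.val.injective)

namespace IntermediateField.LinearDisjoint

variable {A B : IntermediateField k K}

theorem linearIndepOn_id (H : A.LinearDisjoint B) {s : Set K} (hs : s ⊆ A)
    (hli : LinearIndepOn k id s) : LinearIndepOn B id s :=
  H.linearIndependent_left <|
    LinearIndependent.of_comp (v := fun y : s => (⟨y, hs y.2⟩ : A)) A.val.toLinearMap hli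

theorem mem_span_of_mem_span (H : A.LinearDisjoint B) {W : Set K} (hW : W ⊆ A) {x : K}
    (hx : x ∈ A) (hxW : x ∈ Submodule.span B W) : x ∈ Submodule.span k W := by
  by_contra hxk
  obtain ⟨b, hbW, hspan, hli⟩ := exists_linearIndependent k W
  rw [← hspan] at hxk
  have hxb : x ∉ b := fun h => hxk (Submodule.subset_span h)
  have hli' : LinearIndepOn B id (insert x b) :=
    H.linearIndepOn_id (Set.insert_subset hx (hbW.trans hW)) (LinearIndepOn.id_insert hli hxk)
  refine ((linearIndepOn_id_insert hxb).1 hli').2 (Submodule.span_le.2 ?_ hxW)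
  exact Submodule.subset_span.trans (hspan ▸ Submodule.span_le_restrictScalars k B b)

theorem mem_adjoin_of_mem_adjoin_union [Algebra.IsAlgebraic k K] (H : A.LinearDisjoint B)
    {S : Set K} (hS : S ⊆ A) {x : K} (hx : x ∈ A) (hxS : x ∈ adjoin k ((B : Set K) ∪ S)) :
    x ∈ adjoin k S := by
  have hxk : x ∈ Algebra.adjoin k ((B : Set K) ∪ S) := by
    rw [← adjoin_toSubalgebra_of_isAlgebraic fun y _ =>
      Algebra.IsAlgebraic.isAlgebraic (R := k) y]
    exact hxS
  have hxB : x ∈ Algebra.adjoin B S := by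
    refine (Algebra.adjoin_le_iff (S := (Algebra.adjoin B S).restrictScalars k)).2 ?_ hxk
    rintro y (hy | hy)
    · exact Subalgebra.algebraMap_mem (Algebra.adjoin B S) (⟨y, hy⟩ : B)
    · exact Algebra.subset_adjoin (R := B) hy
  have hW : (Submonoid.closure S : Set K) ⊆ A :=
    Submonoid.closure_le (S := A.toSubalgebra.toSubmonoid) |>.2 hS
  rw [← Subalgebra.mem_toSubmodule, Algebra.adjoin_eq_span] at hxB
  refine algebra_adjoin_le_adjoin k S ?_
  rw [← Subalgebra.mem_toSubmodule, Algebra.adjoin_eq_span]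
  exact H.mem_span_of_mem_span hW hx hxB

end IntermediateField.LinearDisjoint

theorem adjoin_bot_union (S : Set K) :
    adjoin k (((⊥ : IntermediateField k K) : Set K) ∪ S) = adjoin k S := by
  rw [adjoin_union, adjoin_self, bot_sup_eq]

theorem isRBasisRel_bot_iff {E : IntermediateField k K} {B : Set K} :
    IsRBasisRel k K ⊥ E B ↔ adjoin k B = E ∧ ∀ x ∈ B, x ∉ adjoin k (B \ {x}) := by
  simp only [IsRBasisRel, adjoin_bot_union]

namespace IsRBasisRel

variable {F E K₁ K₂ : IntermediateField k K} {B B₁ B₂ : Set K}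

theorem subset (h : IsRBasisRel k K F E B) : B ⊆ E :=
  h.1 ▸ Set.subset_union_right.trans (subset_adjoin k _)

theorem adjoin_eq (h : IsRBasisRel k K ⊥ E B) : adjoin k B = E :=
  (isRBasisRel_bot_iff.1 h).1

variable [Algebra.IsAlgebraic k K]

theorem notMem_adjoin_union_diff (h₁ : IsRBasisRel k K ⊥ K₁ B₁)
    (H : K₁.LinearDisjoint K₂) {x : K} (hx : x ∈ B₁) :
    x ∉ adjoin k ((K₂ : Set K) ∪ (B₁ \ {x})) := fun hmem =>
  (isRBasisRel_bot_iff.1 h₁).2 x hx <|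
    H.mem_adjoin_of_mem_adjoin_union (Set.sdiff_subset.trans h₁.subset) (h₁.subset hx) hmem

theorem sup_of_linearDisjoint (h₁ : IsRBasisRel k K ⊥ K₁ B₁)
    (H : K₁.LinearDisjoint K₂) : IsRBasisRel k K K₂ (K₁ ⊔ K₂) B₁ :=
  ⟨by rw [adjoin_union, adjoin_self, h₁.adjoin_eq, sup_comm],
    fun _ hx => h₁.notMem_adjoin_union_diff H hx⟩

theorem notMem_adjoin_union_diff_left (h₁ : IsRBasisRel k K ⊥ K₁ B₁)
    (h₂ : IsRBasisRel k K ⊥ K₂ B₂) (H : K₁.LinearDisjoint K₂) {x : K} (hx : x ∈ B₁) :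
    x ∉ adjoin k ((B₁ ∪ B₂) \ {x}) := by
  refine fun hmem => h₁.notMem_adjoin_union_diff H hx (adjoin.mono k _ _ ?_ hmem)
  rintro y ⟨hy₁ | hy₂, hne⟩
  · exact Or.inr ⟨hy₁, hne⟩
  · exact Or.inl (h₂.subset hy₂)

theorem union_of_linearDisjoint (h₁ : IsRBasisRel k K ⊥ K₁ B₁)
    (h₂ : IsRBasisRel k K ⊥ K₂ B₂) (H : K₁.LinearDisjoint K₂) :
    IsRBasisRel k K ⊥ (K₁ ⊔ K₂) (B₁ ∪ B₂) := by
  refine isRBasisRel_bot_iff.2 ⟨by rw [adjoin_union, h₁.adjoin_eq, h₂.adjoin_eq], ?_⟩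
  rintro x (hx | hx)
  · exact h₁.notMem_adjoin_union_diff_left h₂ H hx
  · exact Set.union_comm B₁ B₂ ▸ h₂.notMem_adjoin_union_diff_left h₁ H.symm hx

theorem disjoint_of_linearDisjoint (h₁ : IsRBasisRel k K ⊥ K₁ B₁)
    (h₂ : IsRBasisRel k K ⊥ K₂ B₂) (H : K₁.LinearDisjoint K₂) : Disjoint B₁ B₂ :=
  Set.disjoint_left.2 fun _ hx₁ hx₂ =>
    h₁.notMem_adjoin_union_diff H hx₁ (subset_adjoin k _ (Or.inl (h₂.subset hx₂)))

end IsRBasisRel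

end

theorem stmt_8 [IsPurelyInseparable k K]
    (K₁ K₂ : IntermediateField k K)
    (hdisj : LinDisjBase k K K₁ K₂)
    (B₁ B₂ : Set K)
    (h₁ : IsRBasisRel k K ⊥ K₁ B₁) (h₂ : IsRBasisRel k K ⊥ K₂ B₂) :
    IsRBasisRel k K ⊥ (K₁ ⊔ K₂) (B₁ ∪ B₂) ∧
    IsRBasisRel k K K₂ (K₁ ⊔ K₂) B₁ ∧
    Cardinal.mk ↥(B₁ ∪ B₂) = Cardinal.mk ↥B₁ + Cardinal.mk ↥B₂ := by
  have H := hdisj.linearDisjoint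
  exact ⟨h₁.union_of_linearDisjoint h₂ H, h₁.sup_of_linearDisjoint H,
    Cardinal.mk_union_of_disjoint (h₁.disjoint_of_linearDisjoint h₂ H)⟩
end

section
/- Let K/k be a purely inseparable extension of characteristic p > 0 such that [K : k(K^p)] is finite. Then the decreasing sequence (k(K^{p^n}))_{n∈ℕ} is eventually stationary, with value equal to rp(K/k), the relative perfect closure of K/k; in particular K is relatively perfect over a finite extension of k. -/
variable (p : ℕ) (k K : Type*) [Field k] [Field K] [Algebra k K]

open IntermediateField

/-- `k(K^{p^n})`. -/
noncomputable def kPn (n : ℕ) : IntermediateField k K :=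
  IntermediateField.adjoin k (Set.range fun x : K => x ^ p ^ n)

/-- An intermediate field `E` is relatively perfect over `k` if `k(E^p) = E`. -/
def RelPerfect (E : IntermediateField k K) : Prop :=
  IntermediateField.adjoin k ((fun x : K => x ^ p) '' (E : Set K)) = E

/-- The relative perfect closure `rp(K/k)`: the largest relatively perfect
intermediate field of `K/k`. -/
noncomputable def rpCl : IntermediateField k K :=
  sSup {E : IntermediateField k K | RelPerfect p k K E}

lemma frob_mem (hp : p.Prime) [CharP K p] (S : Set K) {y : K}
    (hy : y ∈ IntermediateField.adjoin k S) :
    y ^ p ∈ IntermediateField.adjoin k ((fun x : K => x ^ p) '' S) := by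
  haveI : ExpChar K p := ExpChar.prime hp
  set M := IntermediateField.adjoin k ((fun x : K => x ^ p) '' S) with hM
  let M' : IntermediateField k K :=
    { M.toSubfield.comap (frobenius K p) with
      algebraMap_mem' := fun c => by
        show frobenius K p (algebraMap k K c) ∈ M.toSubfield
        rw [frobenius_def, ← map_pow]
        exact M.algebraMap_mem _ }
  have h : IntermediateField.adjoin k S ≤ M' := by
    rw [IntermediateField.adjoin_le_iff]
    intro x hx
    show frobenius K p x ∈ M.toSubfield
    rw [frobenius_def]
    exact subset_adjoin _ _ ⟨x, hx, rfl⟩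
  have hy' : frobenius K p y ∈ M.toSubfield := h hy
  rwa [frobenius_def] at hy'

lemma kPn_zero : kPn p k K 0 = ⊤ := by
  have : (Set.range fun x : K => x ^ p ^ 0) = Set.univ := by
    rw [Set.range_eq_univ]
    exact fun y => ⟨y, by simp⟩
  rw [kPn, this, IntermediateField.adjoin_univ]

lemma pow_image_subset (n : ℕ) :
    (fun x : K => x ^ p) '' (Set.range fun x : K => x ^ p ^ n) ⊆
      Set.range fun x : K => x ^ p ^ (n + 1) := by
  rintro _ ⟨_, ⟨x, rfl⟩, rfl⟩
  exact ⟨x, by simp only [← pow_mul, pow_succ]⟩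

lemma pow_mem_kPn_succ (hp : p.Prime) [CharP K p] (n : ℕ) {y : K}
    (hy : y ∈ kPn p k K n) : y ^ p ∈ kPn p k K (n + 1) :=
  IntermediateField.adjoin.mono _ _ _ (pow_image_subset p K n) (frob_mem p k K hp _ hy)

lemma kPn_antitone : Antitone (kPn p k K) := by
  refine antitone_nat_of_succ_le fun n => IntermediateField.adjoin.mono _ _ _ ?_
  rintro _ ⟨x, rfl⟩
  exact ⟨x ^ p, by simp only [← pow_mul, ← pow_succ']⟩

lemma relPerfect_le_kPn {E : IntermediateField k K} (hp : p.Prime) [CharP K p]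
    (hE : RelPerfect p k K E) (n : ℕ) : E ≤ kPn p k K n := by
  induction n with
  | zero => rw [kPn_zero]; exact le_top
  | succ n ih =>
    conv_lhs => rw [← hE]
    rw [IntermediateField.adjoin_le_iff]
    rintro _ ⟨x, hx, rfl⟩
    exact pow_mem_kPn_succ p k K hp n (ih hx)

/-- If `K/k` is purely inseparable with `[K : k(K^p)]` finite, the decreasing
sequence `(k(K^{p^n}))` is eventually stationary with value `rp(K/k)`; in particular `K` is
relatively perfect over a finite extension of `k`. -/
theorem stmt_9 (hp : p.Prime) [CharP K p] [IsPurelyInseparable k K]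
    (hfin : FiniteDimensional ↥(kPn p k K 1) K) :
    (∃ n₀ : ℕ, ∀ n ≥ n₀, kPn p k K n = rpCl p k K) ∧
    ∃ L : IntermediateField k K, FiniteDimensional k ↥L ∧
      IntermediateField.adjoin ↥L (Set.range fun x : K => x ^ p) = ⊤ := by
  classical
  haveI : IsNoetherian (kPn p k K 1) K := IsNoetherian.iff_fg.2 hfin
  obtain ⟨t, ht⟩ :=
    IntermediateField.fg_of_noetherian (⊤ : IntermediateField (kPn p k K 1) K)
  set L := IntermediateField.adjoin k (↑t : Set K) with hL
  haveI : FiniteDimensional k L :=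
    IntermediateField.finiteDimensional_adjoin fun x _ => IsPurelyInseparable.isIntegral' k x
  have hB : kPn p k K 1 ⊔ L = ⊤ := by
    have := congrArg (IntermediateField.restrictScalars k) ht
    rwa [IntermediateField.restrictScalars_adjoin_eq_sup,
      IntermediateField.restrictScalars_top] at this
  have key : ∀ n, kPn p k K n ⊔ L = ⊤ := by
    intro n
    induction n with
    | zero => rw [kPn_zero]; exact top_sup_eq L
    | succ n ih =>
      rw [eq_top_iff, ← hB]
      refine sup_le ?_ le_sup_right
      rw [kPn, IntermediateField.adjoin_le_iff]
      rintro _ ⟨y, rfl⟩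
      have hy : y ∈ kPn p k K n ⊔ L := by rw [ih]; exact IntermediateField.mem_top
      have hy' : y ∈ IntermediateField.adjoin k
          ((Set.range fun x : K => x ^ p ^ n) ∪ (L : Set K)) := by
        rwa [IntermediateField.adjoin_union, IntermediateField.adjoin_self]
      have h2 : y ^ p ∈ IntermediateField.adjoin k
          ((Set.range fun x : K => x ^ p ^ (n + 1)) ∪ (L : Set K)) := by
        refine IntermediateField.adjoin.mono _ _ _ ?_ (frob_mem p k K hp _ hy')
        rw [Set.image_union]
        refine Set.union_subset_union (pow_image_subset p K n) ?_
        rintro _ ⟨x, hx, rfl⟩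
        exact pow_mem hx p
      rw [IntermediateField.adjoin_union, IntermediateField.adjoin_self] at h2
      show y ^ p ^ 1 ∈ _
      rw [pow_one]
      exact h2
  haveI : Algebra.IsAlgebraic k L := Algebra.IsAlgebraic.of_finite k L
  have htop : ∀ n, IntermediateField.adjoin (kPn p k K n) (L : Set K) = ⊤ := fun n =>
    IntermediateField.restrictScalars_injective k (by
      rw [IntermediateField.restrictScalars_adjoin_eq_sup, IntermediateField.adjoin_self,
        key n, IntermediateField.restrictScalars_top])
  have hrank : ∀ n, Module.rank (kPn p k K n) K ≤ Module.rank k L := fun n => by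
    have h := IntermediateField.adjoin_rank_le_of_isAlgebraic_right (kPn p k K n) L
    rw [htop n] at h
    rwa [(IntermediateField.topEquiv (F := ↥(kPn p k K n)) (E := K)).toLinearEquiv.rank_eq] at h
  haveI hFD : ∀ n, FiniteDimensional (kPn p k K n) K := fun n =>
    Module.rank_lt_aleph0_iff.1 ((hrank n).trans_lt (Module.rank_lt_aleph0 k L))
  have hfr : ∀ n, Module.finrank (kPn p k K n) K ≤ Module.finrank k L := fun n => by
    have := Cardinal.toNat_le_toNat (hrank n) (Module.rank_lt_aleph0 k L)
    simpa [Module.finrank] using this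
  set d : ℕ → ℕ := fun n => Module.finrank (kPn p k K n) K with hd
  have hbdd : ∀ m ∈ Set.range d, m ≤ Module.finrank k L := by rintro _ ⟨n, rfl⟩; exact hfr n
  obtain ⟨n₀, hn₀⟩ : ∃ n₀, ∀ n, d n ≤ d n₀ := by
    have hne : (Set.range d).Nonempty := ⟨d 0, 0, rfl⟩
    obtain ⟨n₀, h₀⟩ := Nat.sSup_mem hne ⟨_, hbdd⟩
    exact ⟨n₀, fun n => h₀ ▸ le_csSup ⟨_, hbdd⟩ ⟨n, rfl⟩⟩
  have hstat : ∀ n ≥ n₀, kPn p k K n = kPn p k K n₀ := fun n hn =>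
    IntermediateField.eq_of_le_of_finrank_le' (kPn_antitone p k K hn) (hn₀ n)
  have hRP : RelPerfect p k K (kPn p k K n₀) := by
    apply le_antisymm
    · rw [IntermediateField.adjoin_le_iff]
      rintro _ ⟨x, hx, rfl⟩
      have := pow_mem_kPn_succ p k K hp n₀ hx
      rwa [hstat (n₀ + 1) (Nat.le_succ _)] at this
    · conv_lhs => rw [← hstat (n₀ + 1) (Nat.le_succ _)]
      refine IntermediateField.adjoin.mono _ _ _ ?_
      rintro _ ⟨x, rfl⟩
      refine ⟨x ^ p ^ n₀, subset_adjoin _ _ ⟨x, rfl⟩, ?_⟩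
      simp only [← pow_mul, pow_succ]
  have hle : rpCl p k K ≤ kPn p k K n₀ := sSup_le fun E hE => relPerfect_le_kPn p k K hp hE n₀
  have hge : kPn p k K n₀ ≤ rpCl p k K := le_sSup hRP
  constructor
  · exact ⟨n₀, fun n hn => by rw [hstat n hn]; exact le_antisymm hge hle⟩
  · refine ⟨L, inferInstance, ?_⟩
    apply IntermediateField.restrictScalars_injective k
    rw [IntermediateField.restrictScalars_adjoin_eq_sup, IntermediateField.restrictScalars_top]
    have h1 : IntermediateField.adjoin k (Set.range fun x : K => x ^ p) = kPn p k K 1 := by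
      simp only [kPn, pow_one]
    rw [h1, sup_comm]
    exact key 1
end
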